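/- Let p_1, …, p_k be primes and λ a positive integer with p_α ∣ λ for all α = 1, …, k. For each α fix an integer m_α ≥ 1, a permutation π_α of {1, …, m_α}, and constants g_{p_α,i}, g_{p_α} ∈ ℤ_λ. Define f_α : ℤ_{p_α}^{m_α} → ℤ_λ by f_α = (λ/p_α)·Σ_{i=1}^{m_α−1} v_{p_α,π_α(i)} v_{p_α,π_α(i+1)} + Σ_{i=1}^{m_α} g_{p_α,i} v_{p_α,i} + g_{p_α} (mod λ), and for γ = (γ_1, …, γ_k) ∈ ℤ_{p_1} × ⋯ × ℤ_{p_k} define a^γ = Σ_{α=1}^{k} f_α + Σ_{α=1}^{k} (λ/p_α)·v_{p_α,π_α(1)}·γ_α (mod λ). Then for every integer τ with 0 < τ < L := ∏_{α=1}^{k} p_α^{m_α}, one has Σ_{γ ∈ ℤ_{p_1}×⋯×ℤ_{p_k}} ρ(ψ(a^γ))(τ) = 0; that is, {ψ(a^γ)} is a Golay complementary set of length ∏_{α=1}^{k} p_α^{m_α} and set size ∏_{α=1}^{k} p_α. -/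

import Mathlib

open Finset

/-!
Summing over `γ` first, the character sum over each `γ_α ∈ ℤ_{p_α}` kills every pair
`(i, i + τ)` whose digits `v_{α, π_α(1)}` differ for some `α`, and contributes `∏ p_α`
otherwise. For a surviving pair let `(A, T)` be the lexicographically first position at which
the digits `v_{A, π_A(T)}` of `i` and `i + τ` differ; then `T ≥ 2`. Replacing the digit
`v_{A, π_A(T-1)}` of both indices by `c ∈ ℤ_{p_A}` keeps their difference `τ` and the position
`(A, T)`, and changes the phase difference by
`c · (λ/p_A) (v_{A, π_A(T)}(i) - v_{A, π_A(T)}(i + τ))`, a nonzero element of order `p_A`.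
So the remaining terms cancel in groups of `p_A`.
-/

/-- `eZMod q x = ω_q^x` where `ω_q = exp(2π√-1/q)`. -/
noncomputable def eZMod (q : ℕ) (x : ZMod q) : ℂ :=
  Complex.exp (2 * (Real.pi : ℂ) * Complex.I * (x.val : ℂ) / (q : ℂ))

/-- Aperiodic autocorrelation of a sequence of length `L` at shift `τ`. -/
noncomputable def aacf (L : ℕ) (a : ℕ → ℂ) (τ : ℕ) : ℂ :=
  ∑ i ∈ Finset.range (L - τ), a i * (starRingEnd ℂ) (a (i + τ))

/-- For `0 ≤ i < ∏ α, p α ^ m α` written as `i = Σ_α i_α · ∏_{β<α} p_β^{m_β}`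
with `0 ≤ i_α < p_α^{m_α}`, `digv p m i α t` is the `t`-th base-`p_α` digit
(1-indexed) of `i_α`, viewed in `ℤ_{p_α}`. -/
def digv {k : ℕ} (p m : Fin k → ℕ) (i : ℕ) : (α : Fin k) → ℕ → ZMod (p α) :=
  fun α t =>
    (((((i / ∏ β ∈ Finset.Iio α, p β ^ m β) % p α ^ m α) / p α ^ (t - 1)) % p α : ℕ) :
      ZMod (p α))

lemma eZMod_eq_stdAddChar (q : ℕ) [NeZero q] (x : ZMod q) : eZMod q x = ZMod.stdAddChar x := by
  rw [ZMod.stdAddChar_apply, ZMod.toCircle_apply]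
  rfl

lemma eZMod_add (q : ℕ) [NeZero q] (x y : ZMod q) : eZMod q (x + y) = eZMod q x * eZMod q y := by
  simp only [eZMod_eq_stdAddChar, AddChar.map_add_eq_mul]

lemma eZMod_mul_conj (q : ℕ) [NeZero q] (x y : ZMod q) :
    eZMod q x * starRingEnd ℂ (eZMod q y) = eZMod q (x - y) := by
  simp only [eZMod_eq_stdAddChar, ← AddChar.map_neg_eq_conj, ← AddChar.map_add_eq_mul,
    sub_eq_add_neg]

lemma eZMod_sum {ι : Type*} (q : ℕ) [NeZero q] (s : Finset ι) (x : ι → ZMod q) :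
    eZMod q (∑ i ∈ s, x i) = ∏ i ∈ s, eZMod q (x i) := by
  classical
  induction s using Finset.induction_on with
  | empty => simp [eZMod]
  | insert i s hi ih => rw [sum_insert hi, prod_insert hi, eZMod_add, ih]

lemma AddChar.sum_range_map_nsmul_eq_zero {G R : Type*} [AddMonoid G] [CommRing R] [IsDomain R]
    (ψ : AddChar G R) {u : G} {n : ℕ} (hn : n • u = 0) (hu : ψ u ≠ 1) :
    ∑ j ∈ range n, ψ (j • u) = 0 := by
  have hgeom := geom_sum_mul (ψ u) n
  rw [← AddChar.map_nsmul_eq_pow, hn, AddChar.map_zero_eq_one, sub_self] at hgeom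
  simp only [AddChar.map_nsmul_eq_pow]
  exact (mul_eq_zero.1 hgeom).resolve_right (sub_ne_zero.2 hu)

def scaledVal (lam : ℕ) {p : ℕ} (x : ZMod p) : ZMod lam :=
  ((lam / p : ℕ) : ZMod lam) * (x.val : ZMod lam)

lemma scaledVal_sub_ne_zero {lam p : ℕ} [NeZero p] (hlam : lam ≠ 0) (hp : p ∣ lam)
    {x y : ZMod p} (hxy : x ≠ y) : scaledVal lam x - scaledVal lam y ≠ 0 := by
  obtain ⟨q, rfl⟩ := hp
  have hq : q ≠ 0 := by rintro rfl; simp at hlam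
  intro h
  have hcast : (((q : ℤ) * ((x.val : ℤ) - y.val) : ℤ) : ZMod (p * q)) = 0 := by
    rw [← h, scaledVal, scaledVal, Nat.mul_div_cancel_left q (NeZero.pos p)]
    push_cast
    ring
  rw [ZMod.intCast_zmod_eq_zero_iff_dvd, Nat.cast_mul, mul_comm (p : ℤ)] at hcast
  have hdvd := (mul_dvd_mul_iff_left (by exact_mod_cast hq)).1 hcast
  have habs : |(x.val : ℤ) - y.val| < p := by
    have := x.val_lt
    have := y.val_lt
    exact abs_sub_lt_iff.2 ⟨by omega, by omega⟩
  refine hxy (ZMod.val_injective p ?_)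
  have := Int.eq_zero_of_abs_lt_dvd hdvd habs
  omega

lemma sum_range_eZMod_mul_scaledVal_sub {lam p : ℕ} [NeZero lam] [NeZero p] (hp : p ∣ lam)
    (x y : ZMod p) :
    ∑ n ∈ range p, eZMod lam ((scaledVal lam x - scaledVal lam y) * n) =
      if x = y then (p : ℂ) else 0 := by
  split_ifs with hxy
  · simp [hxy, eZMod]
  · have hpK : p • (scaledVal lam x - scaledVal lam y) = 0 := by
      rw [scaledVal, scaledVal, ← mul_sub, nsmul_eq_mul, ← mul_assoc, ← Nat.cast_mul,
        Nat.mul_div_cancel' hp, ZMod.natCast_self, zero_mul]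
    have hK := scaledVal_sub_ne_zero (NeZero.ne lam) hp hxy
    simp only [← nsmul_eq_mul', eZMod_eq_stdAddChar]
    refine AddChar.sum_range_map_nsmul_eq_zero (R := ℂ) _ hpK fun h => hK ?_
    rwa [← (ZMod.stdAddChar (N := lam)).map_zero_eq_one, ZMod.injective_stdAddChar.eq_iff] at h

lemma sum_piFinset_eZMod_mul_conj {k lam : ℕ} [NeZero lam] {p : Fin k → ℕ}
    [∀ α, NeZero (p α)] (hpl : ∀ α, p α ∣ lam) (B B' : ZMod lam)
    (x y : (α : Fin k) → ZMod (p α)) :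
    ∑ γ ∈ Fintype.piFinset (fun α => range (p α)),
        eZMod lam (B + ∑ α, scaledVal lam (x α) * ((γ α : ℕ) : ZMod lam)) *
          starRingEnd ℂ
            (eZMod lam (B' + ∑ α, scaledVal lam (y α) * ((γ α : ℕ) : ZMod lam))) =
      eZMod lam (B - B') * ∏ α, if x α = y α then (p α : ℂ) else 0 := by
  have hsplit : ∀ γ : (α : Fin k) → ℕ,
      B + ∑ α, scaledVal lam (x α) * (γ α : ZMod lam) -
          (B' + ∑ α, scaledVal lam (y α) * (γ α : ZMod lam)) =
        (B - B') + ∑ α, (scaledVal lam (x α) - scaledVal lam (y α)) * (γ α : ZMod lam) := by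
    intro γ
    simp only [sub_mul, sum_sub_distrib]
    ring
  simp_rw [eZMod_mul_conj, hsplit, eZMod_add, eZMod_sum]
  rw [← mul_sum, ← prod_univ_sum (fun α => range (p α))
    (fun α n => eZMod lam ((scaledVal lam (x α) - scaledVal lam (y α)) * (n : ZMod lam)))]
  simp_rw [sum_range_eZMod_mul_scaledVal_sub (hpl _)]

section PathForm

lemma sum_Ico_update_mul_update_succ {R : Type*} [CommRing R] (u : ℕ → R) {n t : ℕ}
    (ht : t ∈ Ico 1 n) (a : R) :
    ∑ s ∈ Ico 1 n, Function.update u t a s * Function.update u t a (s + 1) =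
      ∑ s ∈ Ico 1 n, Function.update u t 0 s * Function.update u t 0 (s + 1) +
        a * ((if 2 ≤ t then u (t - 1) else 0) + u (t + 1)) := by
  rw [← sub_eq_iff_eq_add', ← sum_sub_distrib]
  have hfar : ∀ s, s ≠ t → s + 1 ≠ t →
      Function.update u t a s * Function.update u t a (s + 1) -
        Function.update u t 0 s * Function.update u t 0 (s + 1) = 0 := by
    intro s h₁ h₂
    simp [Function.update_of_ne h₁, Function.update_of_ne h₂]
  rcases (show t = 1 ∨ 2 ≤ t by grind) with rfl | ht2
  · rw [sum_eq_single_of_mem 1 ht fun s _ hs => hfar s hs (by grind)]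
    simp
  · rw [sum_eq_add_of_mem (t - 1) t (by grind) ht (by omega) fun s _ hs => hfar s hs.2 (by grind),
      Nat.sub_add_cancel (by omega : 1 ≤ t)]
    simp [Function.update_of_ne (by omega : t - 1 ≠ t), if_pos ht2]
    ring

variable {lam p m : ℕ} {π : Equiv.Perm ℕ} {g : ℕ → ZMod lam} {g₀ : ZMod lam}

variable (lam p m π g g₀) in
def pathForm (v : ℕ → ZMod p) : ZMod lam :=
  ((lam / p : ℕ) : ZMod lam) *
      (∑ i ∈ Ico 1 m, ((v (π i)).val : ZMod lam) * ((v (π (i + 1))).val : ZMod lam)) +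
    ∑ i ∈ Icc 1 m, g i * ((v i).val : ZMod lam) + g₀

variable (lam p π g) in
def pathSlope (t : ℕ) (v : ℕ → ZMod p) : ZMod lam :=
  (if 2 ≤ t then scaledVal lam (v (π (t - 1))) else 0) + scaledVal lam (v (π (t + 1))) +
    g (π t)

lemma pathForm_congr (hπ : ∀ i ∈ Icc 1 m, π i ∈ Icc 1 m) {v w : ℕ → ZMod p}
    (h : ∀ t ∈ Icc 1 m, v t = w t) :
    pathForm lam p m π g g₀ v = pathForm lam p m π g g₀ w := by
  unfold pathForm
  congr 2
  · exact congrArg _ <| sum_congr rfl fun i hi => by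
      rw [h _ (hπ i (by grind)), h _ (hπ (i + 1) (by grind))]
  · exact sum_congr rfl fun i hi => by rw [h i hi]

lemma pathForm_update (hπ : ∀ i ∈ Icc 1 m, π i ∈ Icc 1 m) {t : ℕ} (ht : t ∈ Ico 1 m)
    (v : ℕ → ZMod p) (c : ZMod p) :
    pathForm lam p m π g g₀ (Function.update v (π t) c) =
      pathForm lam p m π g g₀ (Function.update v (π t) 0) +
        (c.val : ZMod lam) * pathSlope lam p π g t v := by
  have hquad : ∀ (d : ZMod p) (s : ℕ), ((Function.update v (π t) d (π s)).val : ZMod lam) =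
      Function.update (fun s => ((v (π s)).val : ZMod lam)) t (d.val : ZMod lam) s := by
    intro d s
    rcases eq_or_ne s t with rfl | hs
    · simp
    · simp [Function.update_of_ne hs, Function.update_of_ne (π.injective.ne hs)]
  have hlin : ∀ (d : ZMod p) (s : ℕ), g s * ((Function.update v (π t) d s).val : ZMod lam) =
      Function.update (fun s => g s * ((v s).val : ZMod lam)) (π t) (g (π t) * d.val) s := by
    intro d s
    rcases eq_or_ne s (π t) with rfl | hs
    · simp
    · simp [Function.update_of_ne hs]
  have hπt : π t ∈ Icc 1 m := hπ t (by grind)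
  unfold pathForm pathSlope scaledVal
  simp only [hquad, hlin, sum_update_of_mem hπt]
  rw [sum_Ico_update_mul_update_succ _ ht]
  split_ifs <;> simp <;> ring

lemma pathSlope_sub_pathSlope {t : ℕ} {v w : ℕ → ZMod p}
    (h : 2 ≤ t → v (π (t - 1)) = w (π (t - 1))) :
    pathSlope lam p π g t v - pathSlope lam p π g t w =
      scaledVal lam (v (π (t + 1))) - scaledVal lam (w (π (t + 1))) := by
  unfold pathSlope
  split_ifs with ht
  · rw [h ht]; ring
  · ring

end PathForm

lemma Fin.prod_castLE_eq_prod_Iio {k : ℕ} {M : Type*} [CommMonoid M] (f : Fin k → M) (α : Fin k) :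
    ∏ j : Fin α, f (Fin.castLE α.is_lt.le j) = ∏ β ∈ Iio α, f β :=
  prod_nbij (Fin.castLE α.is_lt.le) (fun j _ => mem_Iio.2 (Fin.lt_def.2 j.is_lt))
    (fun _ _ _ _ h => Fin.castLE_injective _ h)
    (fun β hβ => ⟨⟨β, Fin.lt_def.1 (mem_Iio.1 hβ)⟩, mem_univ _, rfl⟩) fun _ _ => rfl

lemma Fintype.sum_update_add {ι M : Type*} [Fintype ι] [DecidableEq ι] [AddCommMonoid M]
    {β : ι → Type*} (G : ∀ a, β a → M) (x : ∀ a, β a) (a₀ : ι) (y : β a₀) :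
    ∑ a, G a (Function.update x a₀ y a) + G a₀ (x a₀) = ∑ a, G a (x a) + G a₀ y := by
  have hcompl : ∀ a ∈ ({a₀}ᶜ : Finset ι), G a (Function.update x a₀ y a) = G a (x a) :=
    fun a ha => by rw [Function.update_of_ne (by simpa using ha)]
  rw [Fintype.sum_eq_add_sum_compl a₀, Function.update_self,
    Fintype.sum_eq_add_sum_compl a₀ (fun a => G a (x a)), Finset.sum_congr rfl hcompl]
  abel

section Digits

variable {k : ℕ} (p m : Fin k → ℕ)

def digitEquiv : Fin (∏ α, p α ^ m α) ≃ ((α : Fin k) → Fin (m α) → Fin (p α)) :=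
  finPiFinEquiv.symm.trans (Equiv.piCongrRight fun _ => finFunctionFinEquiv.symm)

def placeValue (α : Fin k) (s : ℕ) : ℕ := (∏ β ∈ Iio α, p β ^ m β) * p α ^ s

lemma digitEquiv_apply (i : Fin (∏ α, p α ^ m α)) (α : Fin k) (s : Fin (m α)) :
    (digitEquiv p m i α s : ℕ) =
      i / (∏ β ∈ Iio α, p β ^ m β) % p α ^ m α / p α ^ (s : ℕ) % p α := by
  rw [← Fin.prod_castLE_eq_prod_Iio]
  rfl

lemma digitEquiv_symm_apply (x : (α : Fin k) → Fin (m α) → Fin (p α)) :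
    ((digitEquiv p m).symm x : ℕ) = ∑ α, ∑ s, (x α s : ℕ) * placeValue p m α s := by
  simp only [digitEquiv, Equiv.symm_trans_apply, Equiv.symm_symm, finPiFinEquiv_apply,
    Equiv.piCongrRight_symm_apply, Pi.map_apply, finFunctionFinEquiv_apply,
    Fin.prod_castLE_eq_prod_Iio (fun β => p β ^ m β), sum_mul, placeValue]
  exact sum_congr rfl fun α _ => sum_congr rfl fun s _ => by ring

lemma digitEquiv_symm_update_add (x : (α : Fin k) → Fin (m α) → Fin (p α)) (α : Fin k)
    (s : Fin (m α)) (c : Fin (p α)) :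
    ((digitEquiv p m).symm (Function.update x α (Function.update (x α) s c)) : ℕ) +
        x α s * placeValue p m α s =
      (digitEquiv p m).symm x + c * placeValue p m α s := by
  have outer := Fintype.sum_update_add
    (fun β (z : Fin (m β) → Fin (p β)) => ∑ s, (z s : ℕ) * placeValue p m β s) x α
    (Function.update (x α) s c)
  have inner := Fintype.sum_update_add
    (fun (s : Fin (m α)) (d : Fin (p α)) => (d : ℕ) * placeValue p m α s) (x α) s c
  rw [digitEquiv_symm_apply, digitEquiv_symm_apply]
  omega

lemma digv_eq_digitEquiv (i : Fin (∏ α, p α ^ m α)) {α : Fin k} {t : ℕ}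
    (ht : t ∈ Icc 1 (m α)) :
    digv p m i α t = ((digitEquiv p m i α ⟨t - 1, by grind⟩ : ℕ) : ZMod (p α)) := by
  rw [digitEquiv_apply]
  rfl

lemma eq_of_digv_eq {i j : ℕ} (hi : i < ∏ α, p α ^ m α) (hj : j < ∏ α, p α ^ m α)
    (h : ∀ α, ∀ t ∈ Icc 1 (m α), digv p m i α t = digv p m j α t) : i = j := by
  suffices digitEquiv p m ⟨i, hi⟩ = digitEquiv p m ⟨j, hj⟩ from
    congrArg Fin.val ((digitEquiv p m).injective this)
  funext α s
  have hs := h α (s + 1) (by simp)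
  rw [digv_eq_digitEquiv p m ⟨i, hi⟩ (by simp), digv_eq_digitEquiv p m ⟨j, hj⟩ (by simp),
    ZMod.natCast_eq_natCast_iff', Nat.mod_eq_of_lt (Fin.is_lt _),
    Nat.mod_eq_of_lt (Fin.is_lt _)] at hs
  simpa using Fin.ext hs

lemma digv_val_eq_digitEquiv (i : Fin (∏ α, p α ^ m α)) {α : Fin k} {t : ℕ}
    (ht : t ∈ Icc 1 (m α)) :
    (digv p m i α t).val = digitEquiv p m i α ⟨t - 1, by grind⟩ := by
  rw [digv_eq_digitEquiv p m i ht, ZMod.val_natCast_of_lt (Fin.is_lt _)]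

lemma digv_val_mul_placeValue_le {i : ℕ} (hi : i < ∏ α, p α ^ m α) {α : Fin k} {t : ℕ}
    (ht : t ∈ Icc 1 (m α)) : (digv p m i α t).val * placeValue p m α (t - 1) ≤ i := by
  have h := digitEquiv_symm_update_add p m (digitEquiv p m ⟨i, hi⟩) α ⟨t - 1, by grind⟩
    ⟨0, (digitEquiv p m ⟨i, hi⟩ α ⟨t - 1, by grind⟩).pos⟩
  rw [Equiv.symm_apply_apply] at h
  rw [digv_val_eq_digitEquiv p m ⟨i, hi⟩ ht]
  dsimp only at h
  omega

def setDigit (i : ℕ) (α : Fin k) (t c : ℕ) : ℕ :=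
  i - (digv p m i α t).val * placeValue p m α (t - 1) + c * placeValue p m α (t - 1)

variable {p m} {i : ℕ} {α : Fin k} {t c : ℕ}

lemma setDigit_eq_digitEquiv_symm (hi : i < ∏ α, p α ^ m α) (ht : t ∈ Icc 1 (m α))
    (hc : c < p α) :
    setDigit p m i α t c = (digitEquiv p m).symm (Function.update (digitEquiv p m ⟨i, hi⟩) α
      (Function.update (digitEquiv p m ⟨i, hi⟩ α) ⟨t - 1, by grind⟩ ⟨c, hc⟩)) := by
  have h := digitEquiv_symm_update_add p m (digitEquiv p m ⟨i, hi⟩) α ⟨t - 1, by grind⟩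
    ⟨c, hc⟩
  have hle := digv_val_mul_placeValue_le p m hi ht
  rw [Equiv.symm_apply_apply] at h
  rw [setDigit]
  rw [digv_val_eq_digitEquiv p m ⟨i, hi⟩ ht] at hle ⊢
  dsimp only at h
  omega

lemma setDigit_lt (hi : i < ∏ α, p α ^ m α) (ht : t ∈ Icc 1 (m α)) (hc : c < p α) :
    setDigit p m i α t c < ∏ α, p α ^ m α := by
  rw [setDigit_eq_digitEquiv_symm hi ht hc]
  exact Fin.is_lt _

lemma digv_setDigit_self (hi : i < ∏ α, p α ^ m α) (ht : t ∈ Icc 1 (m α)) (hc : c < p α) :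
    digv p m (setDigit p m i α t c) α t = c := by
  rw [setDigit_eq_digitEquiv_symm hi ht hc, digv_eq_digitEquiv p m _ ht, Equiv.apply_symm_apply]
  simp

lemma digv_setDigit_of_ne (hi : i < ∏ α, p α ^ m α) (ht : t ∈ Icc 1 (m α)) (hc : c < p α)
    {β : Fin k} {s : ℕ} (hs : s ∈ Icc 1 (m β)) (hne : β ≠ α ∨ s ≠ t) :
    digv p m (setDigit p m i α t c) β s = digv p m i β s := by
  rw [setDigit_eq_digitEquiv_symm hi ht hc, digv_eq_digitEquiv p m _ hs, Equiv.apply_symm_apply,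
    digv_eq_digitEquiv p m ⟨i, hi⟩ hs]
  rcases hne with hβ | hst
  · rw [Function.update_of_ne hβ]
  · rcases eq_or_ne β α with rfl | hβ
    · rw [Function.update_self, Function.update_of_ne (by grind)]
    · rw [Function.update_of_ne hβ]

lemma setDigit_setDigit (hi : i < ∏ α, p α ^ m α) (ht : t ∈ Icc 1 (m α)) (hc : c < p α)
    (c' : ℕ) :
    setDigit p m (setDigit p m i α t c) α t c' = setDigit p m i α t c' := by
  have hself := digv_setDigit_self hi ht hc
  have hle := digv_val_mul_placeValue_le p m hi ht
  unfold setDigit at hself ⊢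
  rw [hself, ZMod.val_natCast_of_lt hc]
  omega

lemma setDigit_digv_val (hi : i < ∏ α, p α ^ m α) (ht : t ∈ Icc 1 (m α)) :
    setDigit p m i α t (digv p m i α t).val = i := by
  have hle := digv_val_mul_placeValue_le p m hi ht
  unfold setDigit
  omega

lemma setDigit_add_of_digv_eq (hi : i < ∏ α, p α ^ m α) (ht : t ∈ Icc 1 (m α)) {τ : ℕ}
    (hτ : digv p m i α t = digv p m (i + τ) α t) (c : ℕ) :
    setDigit p m (i + τ) α t c = setDigit p m i α t c + τ := by
  have hle := digv_val_mul_placeValue_le p m hi ht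
  unfold setDigit
  rw [← hτ]
  omega

lemma setDigit_injOn (hi : i < ∏ α, p α ^ m α) (ht : t ∈ Icc 1 (m α)) :
    Set.InjOn (setDigit p m i α t) (range (p α)) := by
  intro c hc c' hc' h
  have hcc' := digv_setDigit_self hi ht (mem_range.1 hc)
  rw [h, digv_setDigit_self hi ht (mem_range.1 hc'), ZMod.natCast_eq_natCast_iff',
    Nat.mod_eq_of_lt (mem_range.1 hc), Nat.mod_eq_of_lt (mem_range.1 hc')] at hcc'
  exact hcc'.symm

lemma digv_setDigit_eq_digv_setDigit_iff {j : ℕ} (hi : i < ∏ α, p α ^ m α)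
    (hj : j < ∏ α, p α ^ m α) (ht : t ∈ Icc 1 (m α)) (hc : c < p α)
    (hij : digv p m i α t = digv p m j α t) {β : Fin k} {s : ℕ} (hs : s ∈ Icc 1 (m β)) :
    digv p m (setDigit p m i α t c) β s = digv p m (setDigit p m j α t c) β s ↔
      digv p m i β s = digv p m j β s := by
  by_cases hpos : β = α ∧ s = t
  · obtain ⟨rfl, rfl⟩ := hpos
    simp only [digv_setDigit_self hi ht hc, digv_setDigit_self hj ht hc, hij]
  · rw [not_and_or] at hpos
    rw [digv_setDigit_of_ne hi ht hc hs hpos, digv_setDigit_of_ne hj ht hc hs hpos]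

end Digits

section Pivot

variable {k : ℕ} (p m : Fin k → ℕ) (π : Fin k → Equiv.Perm ℕ)

def pivotSet (i j : ℕ) : Finset (Fin k ×ₗ ℕ) :=
  ((univ.sigma fun α => Icc 1 (m α)).image fun x => toLex (x.1, x.2)).filter fun x =>
    digv p m i (ofLex x).1 (π (ofLex x).1 (ofLex x).2) ≠
      digv p m j (ofLex x).1 (π (ofLex x).1 (ofLex x).2)

variable {p m π}

lemma mem_pivotSet {i j : ℕ} {α : Fin k} {t : ℕ} :
    toLex (α, t) ∈ pivotSet p m π i j ↔
      t ∈ Icc 1 (m α) ∧ digv p m i α (π α t) ≠ digv p m j α (π α t) := by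
  simp [pivotSet]

lemma pivotSet_nonempty (hπ : ∀ α, ∀ i ∈ Icc 1 (m α), π α i ∈ Icc 1 (m α)) {i j : ℕ}
    (hi : i < ∏ α, p α ^ m α) (hj : j < ∏ α, p α ^ m α) (hij : i ≠ j) :
    (pivotSet p m π i j).Nonempty := by
  by_contra hempty
  refine hij (eq_of_digv_eq p m hi hj fun α s hs => ?_)
  obtain ⟨t, ht, rfl⟩ := surj_on_of_inj_on_of_card_le (fun t _ => π α t) (hπ α)
    (fun _ _ _ _ h => (π α).injective h) le_rfl s hs
  by_contra hne
  exact hempty ⟨_, mem_pivotSet.2 ⟨ht, hne⟩⟩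

lemma pivotSet_min_spec {i j : ℕ} {A : Fin k} {T : ℕ}
    (h : (pivotSet p m π i j).min = ↑(toLex (A, T))) :
    T ∈ Icc 1 (m A) ∧ digv p m i A (π A T) ≠ digv p m j A (π A T) ∧
      ∀ t ∈ Ico 1 T, digv p m i A (π A t) = digv p m j A (π A t) := by
  obtain ⟨hT, hdiff⟩ := mem_pivotSet.1 (mem_of_min h)
  refine ⟨hT, hdiff, fun t ht => ?_⟩
  by_contra hne
  have hle := h ▸ min_le (mem_pivotSet.2 ⟨by grind, hne⟩)
  rw [WithTop.coe_le_coe, Prod.Lex.toLex_le_toLex] at hle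
  grind

lemma pivotSet_setDigit (hπ : ∀ α, ∀ i ∈ Icc 1 (m α), π α i ∈ Icc 1 (m α)) {i j : ℕ}
    (hi : i < ∏ α, p α ^ m α) (hj : j < ∏ α, p α ^ m α) {α : Fin k} {t c : ℕ}
    (ht : t ∈ Icc 1 (m α)) (hc : c < p α) (hij : digv p m i α t = digv p m j α t) :
    pivotSet p m π (setDigit p m i α t c) (setDigit p m j α t c) = pivotSet p m π i j := by
  refine filter_congr fun x hx => ?_
  obtain ⟨⟨β, s⟩, hs, rfl⟩ := mem_image.1 hx
  exact not_congr
    (digv_setDigit_eq_digv_setDigit_iff hi hj ht hc hij (hπ β s (by simpa using hs)))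

end Pivot

section GolayPhase

variable {k lam : ℕ} {p m : Fin k → ℕ} {π : Fin k → Equiv.Perm ℕ}
  {g : Fin k → ℕ → ZMod lam} {g₀ : Fin k → ZMod lam}

variable (lam p m π g g₀) in
def golayPhase (i : ℕ) : ZMod lam :=
  ∑ α, pathForm lam (p α) (m α) (π α) (g α) (g₀ α) (digv p m i α)

lemma golayPhase_setDigit (hπ : ∀ α, ∀ i ∈ Icc 1 (m α), π α i ∈ Icc 1 (m α)) {i : ℕ}
    (hi : i < ∏ α, p α ^ m α) {A : Fin k} {t : ℕ} (ht : t ∈ Ico 1 (m A)) {c : ℕ}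
    (hc : c < p A) :
    golayPhase lam p m π g g₀ (setDigit p m i A (π A t) c) =
      golayPhase lam p m π g g₀ (setDigit p m i A (π A t) 0) +
        (c : ZMod lam) * pathSlope lam (p A) (π A) (g A) t (digv p m i A) := by
  have hr : π A t ∈ Icc 1 (m A) := hπ A t (by grind)
  have hA : ∀ d < p A,
      pathForm lam (p A) (m A) (π A) (g A) (g₀ A) (digv p m (setDigit p m i A (π A t) d) A) =
        pathForm lam (p A) (m A) (π A) (g A) (g₀ A)
          (Function.update (digv p m i A) (π A t) d) :=
    fun d hd => pathForm_congr (hπ A) fun s hs => by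
      rcases eq_or_ne s (π A t) with rfl | hs'
      · rw [digv_setDigit_self hi hr hd, Function.update_self]
      · rw [digv_setDigit_of_ne hi hr hd hs (Or.inr hs'), Function.update_of_ne hs']
  have hother : ∀ d < p A, ∀ β ∈ ({A}ᶜ : Finset (Fin k)),
      pathForm lam (p β) (m β) (π β) (g β) (g₀ β)
          (digv p m (setDigit p m i A (π A t) d) β) =
        pathForm lam (p β) (m β) (π β) (g β) (g₀ β) (digv p m i β) :=
    fun d hd β hβ => pathForm_congr (hπ β) fun s hs =>
      digv_setDigit_of_ne hi hr hd hs (Or.inl (by simpa using hβ))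
  unfold golayPhase
  simp only [Fintype.sum_eq_add_sum_compl A]
  rw [sum_congr rfl (hother c hc),
    sum_congr rfl (hother 0 (by omega)), hA c hc, hA 0 (by omega),
    pathForm_update (hπ A) ht, ZMod.val_natCast_of_lt hc, Nat.cast_zero]
  ring

lemma sum_range_eZMod_golayPhase_setDigit_sub [NeZero lam] [∀ α, NeZero (p α)]
    (hpl : ∀ α, p α ∣ lam) (hπ : ∀ α, ∀ i ∈ Icc 1 (m α), π α i ∈ Icc 1 (m α))
    {i τ : ℕ} (hiτ : i + τ < ∏ α, p α ^ m α) {A : Fin k} {T : ℕ}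
    (hT : T ∈ Icc 2 (m A))
    (hagree : ∀ t ∈ Ico 1 T, digv p m i A (π A t) = digv p m (i + τ) A (π A t))
    (hdiff : digv p m i A (π A T) ≠ digv p m (i + τ) A (π A T)) :
    ∑ c ∈ range (p A),
      eZMod lam (golayPhase lam p m π g g₀ (setDigit p m i A (π A (T - 1)) c) -
        golayPhase lam p m π g g₀ (setDigit p m i A (π A (T - 1)) c + τ)) = 0 := by
  have hi : i < ∏ α, p α ^ m α := by omega
  have hT' : T - 1 ∈ Ico 1 (m A) := by grind
  have hshift := setDigit_add_of_digv_eq hi (hπ A _ (by grind)) (hagree (T - 1) (by grind))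
  have hslope := pathSlope_sub_pathSlope (lam := lam) (g := g A) (t := T - 1)
    (v := digv p m i A) (w := digv p m (i + τ) A) fun h => hagree (T - 1 - 1) (by grind)
  rw [Nat.sub_add_cancel (by grind : 1 ≤ T)] at hslope
  have hlin : ∀ c ∈ range (p A),
      golayPhase lam p m π g g₀ (setDigit p m i A (π A (T - 1)) c) -
          golayPhase lam p m π g g₀ (setDigit p m i A (π A (T - 1)) c + τ) =
        (golayPhase lam p m π g g₀ (setDigit p m i A (π A (T - 1)) 0) -
            golayPhase lam p m π g g₀ (setDigit p m (i + τ) A (π A (T - 1)) 0)) +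
          (scaledVal lam (digv p m i A (π A T)) - scaledVal lam (digv p m (i + τ) A (π A T))) *
            c := by
    intro c hc
    rw [← hshift, golayPhase_setDigit hπ hi hT' (mem_range.1 hc),
      golayPhase_setDigit hπ hiτ hT' (mem_range.1 hc), ← hslope]
    ring
  rw [sum_congr rfl fun c hc => by rw [hlin c hc, eZMod_add], ← mul_sum,
    sum_range_eZMod_mul_scaledVal_sub (hpl A), if_neg hdiff, mul_zero]

variable (p m π) in
def headAgreeIndices (τ : ℕ) : Finset ℕ :=
  (range (∏ α, p α ^ m α - τ)).filter fun i =>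
    ∀ α, digv p m i α (π α 1) = digv p m (i + τ) α (π α 1)

lemma mem_headAgreeIndices {τ i : ℕ} :
    i ∈ headAgreeIndices p m π τ ↔
      i + τ < ∏ α, p α ^ m α ∧
        ∀ α, digv p m i α (π α 1) = digv p m (i + τ) α (π α 1) := by
  rw [headAgreeIndices, mem_filter, mem_range, Nat.lt_sub_iff_add_lt]

lemma two_le_of_pivotSet_min {i τ : ℕ} (hi : i ∈ headAgreeIndices p m π τ) {A : Fin k}
    {T : ℕ} (hpiv : (pivotSet p m π i (i + τ)).min = ↑(toLex (A, T))) : 2 ≤ T := by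
  obtain ⟨hT, hdiff, -⟩ := pivotSet_min_spec hpiv
  by_contra hT1
  exact hdiff (by rw [show T = 1 by grind]; exact (mem_headAgreeIndices.1 hi).2 A)

lemma filter_setDigit_eq_image [∀ α, NeZero (p α)] (hm : ∀ α, 1 ≤ m α)
    (hπ : ∀ α, ∀ i ∈ Icc 1 (m α), π α i ∈ Icc 1 (m α)) {τ i : ℕ}
    (hi : i ∈ headAgreeIndices p m π τ) {A : Fin k} {T : ℕ}
    (hpiv : (pivotSet p m π i (i + τ)).min = ↑(toLex (A, T))) :
    (((headAgreeIndices p m π τ).filter fun i =>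
        (pivotSet p m π i (i + τ)).min = ↑(toLex (A, T))).filter fun i' =>
          setDigit p m i' A (π A (T - 1)) 0 = setDigit p m i A (π A (T - 1)) 0) =
      (range (p A)).image (setDigit p m i A (π A (T - 1))) := by
  obtain ⟨hiτ, hhead⟩ := mem_headAgreeIndices.1 hi
  obtain ⟨hT, -, hagree⟩ := pivotSet_min_spec hpiv
  have hT2 := two_le_of_pivotSet_min hi hpiv
  have hi : i < ∏ α, p α ^ m α := by omega
  have hr : π A (T - 1) ∈ Icc 1 (m A) := hπ A _ (by grind)
  have hagree_r := hagree (T - 1) (by grind)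
  have hshift := setDigit_add_of_digv_eq hi hr hagree_r
  ext i'
  simp only [mem_filter, mem_image, mem_range, mem_headAgreeIndices]
  constructor
  · rintro ⟨⟨⟨hi'τ, -⟩, -⟩, hkey⟩
    have hi' : i' < ∏ α, p α ^ m α := by omega
    refine ⟨(digv p m i' A (π A (T - 1))).val, ZMod.val_lt _, ?_⟩
    rw [← setDigit_setDigit hi hr (NeZero.pos _), ← hkey,
      setDigit_setDigit hi' hr (NeZero.pos _), setDigit_digv_val hi' hr]
  · rintro ⟨c, hc, rfl⟩
    have hlt := setDigit_lt hiτ hr hc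
    rw [hshift] at hlt
    refine ⟨⟨⟨hlt, fun α => ?_⟩, ?_⟩, setDigit_setDigit hi hr hc 0⟩
    · rw [← hshift, digv_setDigit_eq_digv_setDigit_iff hi hiτ hr hc hagree_r
        (hπ α 1 (mem_Icc.2 ⟨le_rfl, hm α⟩))]
      exact hhead α
    · rw [← hshift, pivotSet_setDigit hπ hi hiτ hr hc hagree_r]
      exact hpiv

lemma sum_filter_pivot_eq_zero [NeZero lam] [∀ α, NeZero (p α)] (hpl : ∀ α, p α ∣ lam)
    (hm : ∀ α, 1 ≤ m α) (hπ : ∀ α, ∀ i ∈ Icc 1 (m α), π α i ∈ Icc 1 (m α))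
    (τ : ℕ) (A : Fin k) (T : ℕ) :
    ∑ i ∈ (headAgreeIndices p m π τ).filter
        (fun i => (pivotSet p m π i (i + τ)).min = ↑(toLex (A, T))),
      eZMod lam (golayPhase lam p m π g g₀ i - golayPhase lam p m π g g₀ (i + τ)) = 0 := by
  classical
  refine sum_cancels_of_partition_cancels
    (Setoid.ker fun i => setDigit p m i A (π A (T - 1)) 0) fun i hi => ?_
  obtain ⟨hi, hpiv⟩ := mem_filter.1 hi
  obtain ⟨hT, hdiff, hagree⟩ := pivotSet_min_spec hpiv
  have hT2 := two_le_of_pivotSet_min hi hpiv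
  have hiτ := (mem_headAgreeIndices.1 hi).1
  simp only [Setoid.ker_def]
  rw [filter_setDigit_eq_image hm hπ hi hpiv,
    sum_image (setDigit_injOn (by omega) (hπ A _ (by grind)))]
  exact sum_range_eZMod_golayPhase_setDigit_sub hpl hπ hiτ (mem_Icc.2 ⟨hT2, (mem_Icc.1 hT).2⟩)
    hagree hdiff

theorem sum_headAgreeIndices_eZMod_golayPhase_sub_eq_zero [NeZero lam] [∀ α, NeZero (p α)]
    (hpl : ∀ α, p α ∣ lam) (hm : ∀ α, 1 ≤ m α)
    (hπ : ∀ α, ∀ i ∈ Icc 1 (m α), π α i ∈ Icc 1 (m α)) {τ : ℕ} (hτ : 0 < τ) :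
    ∑ i ∈ headAgreeIndices p m π τ,
      eZMod lam (golayPhase lam p m π g g₀ i - golayPhase lam p m π g g₀ (i + τ)) = 0 := by
  classical
  rw [← sum_fiberwise_of_maps_to
    fun i hi => mem_image_of_mem (fun i => (pivotSet p m π i (i + τ)).min) hi]
  refine sum_eq_zero fun y hy => ?_
  obtain ⟨i, hi, rfl⟩ := mem_image.1 hy
  have hiτ := (mem_headAgreeIndices.1 hi).1
  obtain ⟨x, hx⟩ := min_of_nonempty
    (pivotSet_nonempty (π := π) (i := i) (j := i + τ) hπ (by omega) hiτ (by omega))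
  rw [hx]
  exact sum_filter_pivot_eq_zero hpl hm hπ τ (ofLex x).1 (ofLex x).2

end GolayPhase

theorem stmt3_general (k lam : ℕ)
    (p m : Fin k → ℕ)
    (hp : ∀ α, (p α).Prime) (hm : ∀ α, 1 ≤ m α)
    (hlam : 0 < lam) (hpl : ∀ α, p α ∣ lam)
    (π : Fin k → Equiv.Perm ℕ)
    (hπ : ∀ α, ∀ i ∈ Finset.Icc 1 (m α), (π α) i ∈ Finset.Icc 1 (m α))
    (g : Fin k → ℕ → ZMod lam) (g₀ : Fin k → ZMod lam)
    (f : (α : Fin k) → (ℕ → ZMod (p α)) → ZMod lam)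
    (hf : ∀ (α : Fin k) (v : ℕ → ZMod (p α)),
      f α v = ((lam / p α : ℕ) : ZMod lam) *
            (∑ i ∈ Finset.Ico 1 (m α),
              ((v ((π α) i)).val : ZMod lam) * ((v ((π α) (i + 1))).val : ZMod lam))
        + ∑ i ∈ Finset.Icc 1 (m α), g α i * ((v i).val : ZMod lam) + g₀ α)
    (a : ((α : Fin k) → ℕ) → ((α : Fin k) → (ℕ → ZMod (p α))) → ZMod lam)
    (ha : ∀ (γ : (α : Fin k) → ℕ) (v : (α : Fin k) → (ℕ → ZMod (p α))),
      a γ v = (∑ α, f α (v α))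
        + ∑ α, ((lam / p α : ℕ) : ZMod lam) *
            ((v α ((π α) 1)).val : ZMod lam) * ((γ α : ℕ) : ZMod lam))
    (τ : ℕ) (hτ0 : 0 < τ) :
    ∑ γ ∈ Fintype.piFinset (fun α => Finset.range (p α)),
      aacf (∏ α, p α ^ m α) (fun i => eZMod lam (a γ (digv p m i))) τ = 0 := by
  have : NeZero lam := ⟨hlam.ne'⟩
  have : ∀ α, NeZero (p α) := fun α => ⟨(hp α).ne_zero⟩
  have hphase : ∀ γ i, a γ (digv p m i) = golayPhase lam p m π g g₀ i +
      ∑ α, scaledVal lam (digv p m i α (π α 1)) * ((γ α : ℕ) : ZMod lam) := by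
    intro γ i
    simp only [ha, hf]
    rfl
  calc _ = ∑ i ∈ range (∏ α, p α ^ m α - τ),
        ∑ γ ∈ Fintype.piFinset (fun α => range (p α)),
          eZMod lam (a γ (digv p m i)) * starRingEnd ℂ (eZMod lam (a γ (digv p m (i + τ)))) :=
        sum_comm
    _ = ∑ i ∈ range (∏ α, p α ^ m α - τ),
        eZMod lam (golayPhase lam p m π g g₀ i - golayPhase lam p m π g g₀ (i + τ)) *
          if ∀ α, digv p m i α (π α 1) = digv p m (i + τ) α (π α 1) then
            ∏ α, (p α : ℂ)
          else 0 := by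
        refine sum_congr rfl fun i _ => ?_
        simp only [hphase, sum_piFinset_eZMod_mul_conj hpl, prod_ite_zero, mem_univ, true_imp_iff]
    _ = (∏ α, (p α : ℂ)) * ∑ i ∈ headAgreeIndices p m π τ,
        eZMod lam (golayPhase lam p m π g g₀ i - golayPhase lam p m π g g₀ (i + τ)) := by
        rw [headAgreeIndices, sum_filter, mul_sum]
        exact sum_congr rfl fun i _ => by split_ifs <;> ring
    _ = 0 := by rw [sum_headAgreeIndices_eZMod_golayPhase_sub_eq_zero hpl hm hπ hτ0, mul_zero]

theorem stmt3 (k lam : ℕ) (hk : 1 ≤ k)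
    (p m : Fin k → ℕ)
    (hp : ∀ α, (p α).Prime) (hm : ∀ α, 1 ≤ m α)
    (hlam : 0 < lam) (hpl : ∀ α, p α ∣ lam)
    (π : Fin k → Equiv.Perm ℕ)
    (hπ : ∀ α, ∀ i ∈ Finset.Icc 1 (m α), (π α) i ∈ Finset.Icc 1 (m α))
    (g : Fin k → ℕ → ZMod lam) (g₀ : Fin k → ZMod lam)
    (f : (α : Fin k) → (ℕ → ZMod (p α)) → ZMod lam)
    (hf : ∀ (α : Fin k) (v : ℕ → ZMod (p α)),
      f α v = ((lam / p α : ℕ) : ZMod lam) *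
            (∑ i ∈ Finset.Ico 1 (m α),
              ((v ((π α) i)).val : ZMod lam) * ((v ((π α) (i + 1))).val : ZMod lam))
        + ∑ i ∈ Finset.Icc 1 (m α), g α i * ((v i).val : ZMod lam) + g₀ α)
    (a : ((α : Fin k) → ℕ) → ((α : Fin k) → (ℕ → ZMod (p α))) → ZMod lam)
    (ha : ∀ (γ : (α : Fin k) → ℕ) (v : (α : Fin k) → (ℕ → ZMod (p α))),
      a γ v = (∑ α, f α (v α))
        + ∑ α, ((lam / p α : ℕ) : ZMod lam) *
            ((v α ((π α) 1)).val : ZMod lam) * ((γ α : ℕ) : ZMod lam))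
    (τ : ℕ) (hτ0 : 0 < τ) (hτL : τ < ∏ α, p α ^ m α) :
    ∑ γ ∈ Fintype.piFinset (fun α => Finset.range (p α)),
      aacf (∏ α, p α ^ m α) (fun i => eZMod lam (a γ (digv p m i))) τ = 0 :=
  stmt3_general k lam p m hp hm hlam hpl π hπ g g₀ f hf a ha τ hτ0
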